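/- arXiv:2405.02988 — 3 statements merged into one kernel-verified Lean document; each statement's English description precedes it below -/
import Mathlib

section
/- For integers k, j ≥ 0: if μ > −1 and j ≥ 1 then ∂/∂z̄ Q^μ_{k,j}(z,w) = (j(k+μ+1)/(μ+1)) Q^{μ+1}_{k,j−1}(z,w), while for j = 0 the left-hand side vanishes; and if μ > 0 then (1−zw) ∂/∂z Q^μ_{k,j}(z,w) − μ w Q^μ_{k,j}(z,w) = −μ Q^{μ−1}_{k,j+1}(z,w). These are identities of bivariate polynomials in (z,w). -/
/-! Substituting `t = 2zw - 1` turns `((t - 1)/2)^m` into `T^m` with `T = zw - 1`, and the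
normalisation `j!/(μ+1)_j` turns the Jacobi coefficients into those of the terminating Gauss
series `₂F₁(-a, b; c; -T) = ∑ₘ C(a,m) (b)ₘ/(c)ₘ Tᵐ`. So each branch of `Q^μ_{k,j}` is a power of
`z` or of `w` times this series in `T`, with `a = min k j`, `b = max k j + μ + 1`, `c = μ + 1`.
Since `∂T/∂w = z` and `∂T/∂z = w`, each ladder identity reduces, after cancelling the monomial
factor and using `zw = T + 1`, to a contiguous relation of `₂F₁` in the single variable `T`,
which is checked coefficient by coefficient. -/

noncomputable def jacobiP (α β : ℝ) (n : ℕ) : Polynomial ℝ :=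
  (n.factorial : ℝ)⁻¹ •
    ∑ k ∈ Finset.range (n + 1),
      ((n.choose k : ℝ) * ((ascPochhammer ℝ (n - k)).eval ((k : ℝ) + α + 1)) *
          ((ascPochhammer ℝ k).eval ((n : ℝ) + α + β + 1))) •
        ((Polynomial.X - 1) * Polynomial.C (2⁻¹ : ℝ)) ^ k

noncomputable def zernikeQ (μ : ℝ) (k j : ℕ) : MvPolynomial (Fin 2) ℂ :=
  if j ≤ k then
    MvPolynomial.C ((((j.factorial : ℝ) / ((ascPochhammer ℝ j).eval (μ + 1)) : ℝ) : ℂ)) *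
      MvPolynomial.X 0 ^ (k - j) *
      Polynomial.aeval (2 * MvPolynomial.X 0 * MvPolynomial.X 1 - 1)
        (jacobiP μ ((k - j : ℕ) : ℝ) j)
  else
    MvPolynomial.C ((((k.factorial : ℝ) / ((ascPochhammer ℝ k).eval (μ + 1)) : ℝ) : ℂ)) *
      MvPolynomial.X 1 ^ (j - k) *
      Polynomial.aeval (2 * MvPolynomial.X 0 * MvPolynomial.X 1 - 1)
        (jacobiP μ ((j - k : ℕ) : ℝ) k)

section
open Polynomial

theorem ascPochhammer_eval_succ_left {S : Type*} [CommSemiring S] (x : S) (n : ℕ) :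
    (ascPochhammer S (n + 1)).eval x = x * (ascPochhammer S n).eval (x + 1) := by
  simp [ascPochhammer_succ_left, eval_comp]

theorem ascPochhammer_eval_add {S : Type*} [CommSemiring S] (x : S) (n m : ℕ) :
    (ascPochhammer S (n + m)).eval x =
      (ascPochhammer S n).eval x * (ascPochhammer S m).eval (x + n) := by
  simp [← ascPochhammer_mul, eval_comp]

theorem cast_choose_succ_mul {R : Type*} [CommRing R] (a m : ℕ) :
    (a.choose (m + 1) : R) * (m + 1) = a.choose m * (a - m) := by
  rcases le_or_gt m a with h | h
  · have := congrArg (Nat.cast (R := R)) (Nat.choose_succ_right_eq a m)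
    push_cast [Nat.cast_sub h] at this
    exact this
  · simp [Nat.choose_eq_zero_of_lt h, Nat.choose_eq_zero_of_lt (h.trans (Nat.lt_succ_self m))]

noncomputable def hyperCoeff (a : ℕ) (b c : ℝ) (m : ℕ) : ℝ :=
  a.choose m * (ascPochhammer ℝ m).eval b / (ascPochhammer ℝ m).eval c

/-- The terminating Gauss series `₂F₁(-a, b; c; -X)`. -/
noncomputable def hyperPoly (a : ℕ) (b c : ℝ) : ℝ[X] :=
  ∑ m ∈ Finset.range (a + 1), C (hyperCoeff a b c m) * X ^ m

theorem coeff_hyperPoly (a : ℕ) (b c : ℝ) (m : ℕ) :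
    (hyperPoly a b c).coeff m = hyperCoeff a b c m := by
  simp only [hyperPoly, finsetSum_coeff, coeff_C_mul_X_pow, Finset.sum_ite_eq, Finset.mem_range]
  split_ifs with h
  · rfl
  · simp [hyperCoeff, Nat.choose_eq_zero_of_lt (by omega : a < m)]

section
variable {c : ℝ} (a : ℕ) (b : ℝ) (m : ℕ)

theorem hyperCoeff_succ (hc : 0 < c) :
    hyperCoeff a b c (m + 1) = hyperCoeff a b c m * ((a - m) * (b + m) / ((m + 1) * (c + m))) := by
  have hm : (ascPochhammer ℝ m).eval c ≠ 0 := (ascPochhammer_pos m c hc).ne'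
  have hcm : c + m ≠ 0 := by positivity
  have h := cast_choose_succ_mul (R := ℝ) a m
  simp only [hyperCoeff, ascPochhammer_succ_eval]
  field_simp
  linear_combination (ascPochhammer ℝ m).eval b * (b + m) * h

theorem hyperCoeff_succ_succ (hc : 0 < c) :
    hyperCoeff (a + 1) b c (m + 1) =
      hyperCoeff a (b + 1) (c + 1) m * ((a + 1) * b / ((m + 1) * c)) := by
  have hm : (ascPochhammer ℝ m).eval (c + 1) ≠ 0 := (ascPochhammer_pos m _ (by linarith)).ne'
  have h : ((a + 1).choose (m + 1) : ℝ) * (m + 1) = (a + 1) * a.choose m := by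
    exact_mod_cast (Nat.add_one_mul_choose_eq a m).symm
  simp only [hyperCoeff, ascPochhammer_eval_succ_left]
  field_simp
  linear_combination b * (ascPochhammer ℝ m).eval (b + 1) * h

theorem hyperCoeff_add_one_right (hc : 0 < c) :
    hyperCoeff a b (c + 1) m = hyperCoeff a b c m * (c / (c + m)) := by
  have hm : (ascPochhammer ℝ m).eval (c + 1) ≠ 0 := (ascPochhammer_pos m _ (by linarith)).ne'
  have hm' : (ascPochhammer ℝ m).eval c ≠ 0 := (ascPochhammer_pos m c hc).ne'
  have hcm : c + m ≠ 0 := by positivity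
  have h : c * (ascPochhammer ℝ m).eval (c + 1) = (ascPochhammer ℝ m).eval c * (c + m) := by
    rw [← ascPochhammer_eval_succ_left, ascPochhammer_succ_eval]
  simp only [hyperCoeff]
  field_simp
  linear_combination -(a.choose m : ℝ) * (ascPochhammer ℝ m).eval b * h

theorem derivative_hyperPoly (hc : 0 < c) :
    derivative (hyperPoly (a + 1) b c) = C ((a + 1) * b / c) * hyperPoly a (b + 1) (c + 1) := by
  ext m
  simp only [coeff_derivative, coeff_C_mul, coeff_hyperPoly, hyperCoeff_succ_succ _ _ _ hc]
  field_simp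

theorem hyperPoly_raise_c (hc : 0 < c) :
    C (b - c - a) * hyperPoly a b c + (X + 1) * derivative (hyperPoly a b c) =
      C ((b - c) * (a + c) / c) * hyperPoly a b (c + 1) := by
  ext m
  rcases m with _ | m <;>
    simp only [coeff_add, coeff_C_mul, add_mul, one_mul, coeff_X_mul, coeff_X_mul_zero,
      coeff_derivative, coeff_hyperPoly, hyperCoeff_succ _ _ _ hc,
      hyperCoeff_add_one_right _ _ _ hc]
  · field_simp
    ring
  · have : c + m ≠ 0 := by positivity
    push_cast
    field_simp
    ring

theorem hyperPoly_lower_c (hc : 0 < c) :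
    X * derivative (hyperPoly a b (c + 1)) + C c * hyperPoly a b (c + 1) =
      C c * hyperPoly a b c := by
  ext m
  rcases m with _ | m <;>
    simp only [coeff_add, coeff_C_mul, coeff_X_mul, coeff_X_mul_zero, coeff_derivative,
      coeff_hyperPoly, hyperCoeff_add_one_right _ _ _ hc]
  · simp [hyperCoeff, hc.ne']
  · have : c + (m + 1 : ℕ) ≠ 0 := by positivity
    field_simp
    push_cast
    ring

theorem hyperCoeff_raise_a (hc : 0 < c) (n : ℕ) :
    (b - a + n) * hyperCoeff a (b + 1) (c + 1) n +
        (n + 1 + c) * hyperCoeff a (b + 1) (c + 1) (n + 1) =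
      c * hyperCoeff (a + 1) b c (n + 1) := by
  rw [hyperCoeff_succ _ _ _ (by linarith), hyperCoeff_succ_succ _ _ _ hc]
  have : c + 1 + n ≠ 0 := by positivity
  field_simp
  ring

theorem hyperPoly_raise_a (hc : 0 < c) :
    X * (C (b - c - a) * hyperPoly a (b + 1) (c + 1) +
        (X + 1) * derivative (hyperPoly a (b + 1) (c + 1))) +
      C c * (X + 1) * hyperPoly a (b + 1) (c + 1) = C c * hyperPoly (a + 1) b c := by
  ext (_ | _ | m) <;>
    simp only [mul_add, add_mul, mul_assoc, one_mul, coeff_add, coeff_C_mul, coeff_X_mul,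
      coeff_X_mul_zero, coeff_derivative, coeff_hyperPoly]
  · simp [hyperCoeff]
  · linear_combination hyperCoeff_raise_a a b hc 0
  · have h := hyperCoeff_raise_a a b hc (m + 1)
    push_cast at h ⊢
    linear_combination h

end

theorem jacobiP_eq_comp {α : ℝ} (hα : 0 < α + 1) (β : ℝ) (n : ℕ) :
    C ((n.factorial : ℝ) / (ascPochhammer ℝ n).eval (α + 1)) * jacobiP α β n =
      (hyperPoly n (n + α + β + 1) (α + 1)).comp ((X - 1) * C 2⁻¹) := by
  simp only [jacobiP, hyperPoly, Finset.smul_sum, Finset.mul_sum, sum_comp, mul_comp, C_comp,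
    X_pow_comp, smul_eq_C_mul, ← mul_assoc, ← C_mul]
  refine Finset.sum_congr rfl fun m hm => ?_
  congr 2
  have hmn : m + (n - m) = n := Nat.add_sub_cancel' (Nat.lt_succ_iff.mp (Finset.mem_range.mp hm))
  have hpoch := ascPochhammer_eval_add (α + 1) m (n - m)
  rw [hmn] at hpoch
  have h1 : (ascPochhammer ℝ m).eval (α + 1) ≠ 0 := (ascPochhammer_pos m _ hα).ne'
  have h2 : (ascPochhammer ℝ (n - m)).eval (α + 1 + m) ≠ 0 :=
    (ascPochhammer_pos _ _ (by positivity)).ne'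
  have h3 : (n.factorial : ℝ) ≠ 0 := by positivity
  rw [hpoch, hyperCoeff, show (m : ℝ) + α + 1 = α + 1 + m by ring]
  field_simp

end

section
open MvPolynomial

theorem pderiv_aeval {σ : Type*} (i : σ) (P : Polynomial ℝ) (g : MvPolynomial σ ℂ) :
    pderiv i (Polynomial.aeval g P) =
      Polynomial.aeval g (Polynomial.derivative P) * pderiv i g := by
  have h := ((pderiv i).restrictScalars ℝ).map_aeval P g
  rwa [Derivation.restrictScalars_apply, Derivation.restrictScalars_apply, smul_eq_mul] at h

theorem aeval_C_real {σ : Type*} (g : MvPolynomial σ ℂ) (r : ℝ) :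
    Polynomial.aeval g (Polynomial.C r) = C (r : ℂ) := by
  simp [MvPolynomial.algebraMap_apply]

theorem C_mul_aeval_jacobiP {μ : ℝ} (hμ : -1 < μ) (β : ℝ) (n : ℕ) :
    C (((n.factorial : ℝ) / (ascPochhammer ℝ n).eval (μ + 1) : ℝ) : ℂ) *
        Polynomial.aeval (2 * X 0 * X 1 - 1 : MvPolynomial (Fin 2) ℂ) (jacobiP μ β n) =
      Polynomial.aeval (X 0 * X 1 - 1 : MvPolynomial (Fin 2) ℂ)
        (hyperPoly n (n + μ + β + 1) (μ + 1)) := by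
  have hT : Polynomial.aeval (2 * X 0 * X 1 - 1 : MvPolynomial (Fin 2) ℂ)
      ((Polynomial.X - 1) * Polynomial.C (2⁻¹ : ℝ)) = X 0 * X 1 - 1 := by
    have h2 : (2 : MvPolynomial (Fin 2) ℂ) * C 2⁻¹ = 1 := by
      rw [← map_ofNat C 2, ← C_mul]
      norm_num
    simp only [map_mul, map_sub, map_one, Polynomial.aeval_X, aeval_C_real]
    push_cast
    linear_combination (X 0 * X 1 - 1 : MvPolynomial (Fin 2) ℂ) * h2
  rw [← hT, ← Polynomial.aeval_comp, ← jacobiP_eq_comp (by linarith), map_mul, aeval_C_real]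

theorem pderiv_one_aeval (P : Polynomial ℝ) :
    pderiv 1 (Polynomial.aeval (X 0 * X 1 - 1 : MvPolynomial (Fin 2) ℂ) P) =
      Polynomial.aeval (X 0 * X 1 - 1 : MvPolynomial (Fin 2) ℂ) (Polynomial.derivative P) *
        X 0 := by
  simp [pderiv_aeval]

theorem pderiv_zero_aeval (P : Polynomial ℝ) :
    pderiv 0 (Polynomial.aeval (X 0 * X 1 - 1 : MvPolynomial (Fin 2) ℂ) P) =
      Polynomial.aeval (X 0 * X 1 - 1 : MvPolynomial (Fin 2) ℂ) (Polynomial.derivative P) *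
        X 1 := by
  simp [pderiv_aeval]

theorem zernikeQ_eq_X0_pow_mul {μ : ℝ} (hμ : -1 < μ) {k j : ℕ} (h : j ≤ k) :
    zernikeQ μ k j = X 0 ^ (k - j) *
      Polynomial.aeval (X 0 * X 1 - 1 : MvPolynomial (Fin 2) ℂ)
        (hyperPoly j (k + μ + 1) (μ + 1)) := by
  rw [zernikeQ, if_pos h, mul_right_comm, C_mul_aeval_jacobiP hμ, Nat.cast_sub h,
    show (j : ℝ) + μ + (k - j) + 1 = k + μ + 1 by ring, mul_comm]

theorem zernikeQ_eq_X1_pow_mul {μ : ℝ} (hμ : -1 < μ) {k j : ℕ} (h : k ≤ j) :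
    zernikeQ μ k j = X 1 ^ (j - k) *
      Polynomial.aeval (X 0 * X 1 - 1 : MvPolynomial (Fin 2) ℂ)
        (hyperPoly k (j + μ + 1) (μ + 1)) := by
  rcases h.eq_or_lt with rfl | hlt
  · simpa using zernikeQ_eq_X0_pow_mul hμ le_rfl
  rw [zernikeQ, if_neg (not_le.mpr hlt), mul_right_comm, C_mul_aeval_jacobiP hμ,
    Nat.cast_sub hlt.le, show (k : ℝ) + μ + (j - k) + 1 = j + μ + 1 by ring, mul_comm]

theorem pderiv_one_zernikeQ_succ_of_lt {μ : ℝ} (hμ : -1 < μ) {k j : ℕ} (h : j < k) :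
    pderiv 1 (zernikeQ μ k (j + 1)) =
      C ((((j + 1 : ℕ) : ℝ) * (k + μ + 1) / (μ + 1) : ℝ) : ℂ) * zernikeQ (μ + 1) k j := by
  rw [zernikeQ_eq_X0_pow_mul hμ h, zernikeQ_eq_X0_pow_mul (by linarith) h.le,
    show k - j = k - (j + 1) + 1 by omega, show (k : ℝ) + (μ + 1) + 1 = k + μ + 1 + 1 by ring]
  simp only [pderiv_mul, pderiv_one_aeval, pderiv_pow, pderiv_X_of_ne (by decide : (0 : Fin 2) ≠ 1),
    derivative_hyperPoly _ _ (by linarith : 0 < μ + 1), map_mul, aeval_C_real]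
  push_cast
  ring

theorem pderiv_one_zernikeQ_succ_of_le {μ : ℝ} (hμ : -1 < μ) {k j : ℕ} (h : k ≤ j) :
    pderiv 1 (zernikeQ μ k (j + 1)) =
      C ((((j + 1 : ℕ) : ℝ) * (k + μ + 1) / (μ + 1) : ℝ) : ℂ) * zernikeQ (μ + 1) k j := by
  have hF := hyperPoly_raise_c k ((j + 1 : ℕ) + μ + 1) (by linarith : 0 < μ + 1)
  rw [show ((j + 1 : ℕ) : ℝ) + μ + 1 - (μ + 1) - k = ((j - k + 1 : ℕ) : ℝ) by
      push_cast [Nat.cast_sub h]; ring,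
    show ((j + 1 : ℕ) : ℝ) + μ + 1 - (μ + 1) = (j + 1 : ℕ) by ring,
    show (k : ℝ) + (μ + 1) = k + μ + 1 by ring, map_natCast] at hF
  rw [zernikeQ_eq_X1_pow_mul hμ (by omega : k ≤ j + 1), zernikeQ_eq_X1_pow_mul (by linarith) h,
    show j + 1 - k = j - k + 1 by omega,
    show (j : ℝ) + (μ + 1) + 1 = (j + 1 : ℕ) + μ + 1 by push_cast; ring]
  replace hF := congrArg (Polynomial.aeval (X 0 * X 1 - 1 : MvPolynomial (Fin 2) ℂ)) hF
  simp only [pderiv_mul, pderiv_one_aeval, pderiv_pow, Nat.add_sub_cancel, pderiv_X_self,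
    map_mul, map_add, map_natCast, aeval_C_real, Polynomial.aeval_X, map_one] at hF ⊢
  linear_combination X 1 ^ (j - k) * hF

theorem zernikeQ_ladder_z_of_le {μ : ℝ} (hμ : 0 < μ) {k j : ℕ} (h : k ≤ j) :
    (1 - X 0 * X 1) * pderiv 0 (zernikeQ μ k j) - C (μ : ℂ) * X 1 * zernikeQ μ k j =
      -(C (μ : ℂ) * zernikeQ (μ - 1) k (j + 1)) := by
  have hF := congrArg (Polynomial.aeval (X 0 * X 1 - 1 : MvPolynomial (Fin 2) ℂ))
    (hyperPoly_lower_c k (j + μ + 1) hμ)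
  rw [zernikeQ_eq_X1_pow_mul (by linarith) h,
    zernikeQ_eq_X1_pow_mul (by linarith) (by omega : k ≤ j + 1),
    show j + 1 - k = j - k + 1 by omega,
    show ((j + 1 : ℕ) : ℝ) + (μ - 1) + 1 = j + μ + 1 by push_cast; ring, sub_add_cancel]
  simp only [pderiv_mul, pderiv_zero_aeval, pderiv_pow,
    pderiv_X_of_ne (by decide : (1 : Fin 2) ≠ 0), map_mul, map_add, aeval_C_real,
    Polynomial.aeval_X] at hF ⊢
  linear_combination -X 1 ^ (j - k + 1) * hF

theorem zernikeQ_ladder_z_of_lt {μ : ℝ} (hμ : 0 < μ) {k j : ℕ} (h : j < k) :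
    (1 - X 0 * X 1) * pderiv 0 (zernikeQ μ k j) - C (μ : ℂ) * X 1 * zernikeQ μ k j =
      -(C (μ : ℂ) * zernikeQ (μ - 1) k (j + 1)) := by
  have hF := hyperPoly_raise_a j (k + μ) hμ
  rw [show (k : ℝ) + μ - μ - j = ((k - (j + 1) + 1 : ℕ) : ℝ) by push_cast [Nat.cast_sub h]; ring,
    map_natCast] at hF
  rw [zernikeQ_eq_X0_pow_mul (by linarith) h.le, zernikeQ_eq_X0_pow_mul (by linarith) h,
    show k - j = k - (j + 1) + 1 by omega, show (k : ℝ) + (μ - 1) + 1 = k + μ by ring,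
    sub_add_cancel]
  replace hF := congrArg (Polynomial.aeval (X 0 * X 1 - 1 : MvPolynomial (Fin 2) ℂ)) hF
  simp only [pderiv_mul, pderiv_zero_aeval, pderiv_pow, Nat.add_sub_cancel, pderiv_X_self,
    map_mul, map_add, map_natCast, aeval_C_real, Polynomial.aeval_X, map_one] at hF ⊢
  linear_combination -X 0 ^ (k - (j + 1)) * hF

theorem pderiv_one_zernikeQ_zero (μ : ℝ) (k : ℕ) : pderiv 1 (zernikeQ μ k 0) = 0 := by
  simp [zernikeQ, jacobiP]

end

open MvPolynomial in
theorem zernike_ladder_Z2 (μ : ℝ) (k j : ℕ) :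
    (μ > -1 → 1 ≤ j →
      pderiv (1 : Fin 2) (zernikeQ μ k j) =
        C ((((j : ℝ) * ((k : ℝ) + μ + 1) / (μ + 1) : ℝ)) : ℂ) *
          zernikeQ (μ + 1) k (j - 1)) ∧
    (j = 0 → pderiv (1 : Fin 2) (zernikeQ μ k j) = 0) ∧
    (μ > 0 →
      (1 - X 0 * X 1) * pderiv (0 : Fin 2) (zernikeQ μ k j) -
          C ((μ : ℂ)) * X 1 * zernikeQ μ k j =
        -(C ((μ : ℂ)) * zernikeQ (μ - 1) k (j + 1))) := by
  refine ⟨fun hμ hj => ?_, fun hj => hj ▸ pderiv_one_zernikeQ_zero μ k, fun hμ => ?_⟩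
  · obtain ⟨j, rfl⟩ := Nat.exists_eq_add_of_le' hj
    rw [Nat.add_sub_cancel]
    rcases lt_or_ge j k with h | h
    · exact pderiv_one_zernikeQ_succ_of_lt hμ h
    · exact pderiv_one_zernikeQ_succ_of_le hμ h
  · rcases lt_or_ge j k with h | h
    · exact zernikeQ_ladder_z_of_lt hμ h
    · exact zernikeQ_ladder_z_of_le hμ h
end

section
/- Let μ > −1 and k, j ≥ 0 be integers. If k ≥ 1 then (1−zw) ∂/∂z Q^μ_{k,j}(z,w) + k w Q^μ_{k,j}(z,w) = k Q^μ_{k−1,j}(z,w), while for k = 0 the left-hand side vanishes. Moreover, (1−zw) ∂/∂z̄ Q^μ_{k,j}(z,w) − (k+μ+1) z Q^μ_{k,j}(z,w) = −(k+μ+1) Q^μ_{k+1,j}(z,w). These are identities of bivariate polynomials in (z,w). -/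
local notation "MP" => MvPolynomial (Fin 2) ℂ
local notation "TT" => (2 * MvPolynomial.X 0 * MvPolynomial.X 1 - 1 : MvPolynomial (Fin 2) ℂ)

section Univ
open Polynomial Finset

noncomputable def pch (m : ℕ) (a : ℝ) : ℝ := (ascPochhammer ℝ m).eval a
lemma pch_zero (a : ℝ) : pch 0 a = 1 := by simp [pch]
lemma pch_succ (m : ℕ) (a : ℝ) : pch (m+1) a = pch m a * (a + m) := ascPochhammer_succ_eval m a
lemma pch_succ_left (m : ℕ) (a : ℝ) : pch (m+1) a = a * pch m (a+1) := by
  unfold pch; rw [ascPochhammer_succ_left, X_mul, eval_mul_X, eval_comp]; simp [mul_comm]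
lemma pch_shift (m : ℕ) (a : ℝ) : pch m a * (a + m) = a * pch m (a+1) := by
  rw [← pch_succ, pch_succ_left]

noncomputable def jc (α β : ℝ) (n s : ℕ) : ℝ :=
  (n.choose s : ℝ) * pch (n - s) ((s : ℝ) + α + 1) * pch s ((n : ℝ) + α + β + 1)
lemma jc_zero (α β : ℝ) {n s : ℕ} (h : n < s) : jc α β n s = 0 := by
  simp [jc, Nat.choose_eq_zero_of_lt h]

lemma castN1 (n s : ℕ) (hs : s ≤ n) :
    ((n:ℝ)+1-s) * ((n+1).choose s : ℝ) = ((n:ℝ)+1) * (n.choose s : ℝ) := by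
  rw [Nat.cast_choose ℝ (by omega : s ≤ n + 1), Nat.cast_choose ℝ hs]
  have e1 : n + 1 - s = (n - s) + 1 := by omega
  rw [e1]
  have hne : ((s.factorial : ℝ)) ≠ 0 := by exact_mod_cast s.factorial_ne_zero
  have hne2 : (((n-s).factorial : ℝ)) ≠ 0 := by exact_mod_cast (n-s).factorial_ne_zero
  have hne3 : ((n:ℝ) - s + 1) ≠ 0 := by
    have : (s:ℝ) ≤ n := by exact_mod_cast hs
    linarith
  have e4 : (((n-s)+1).factorial : ℝ) = ((n:ℝ)-s+1) * ((n-s).factorial : ℝ) := by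
    rw [Nat.factorial_succ]; push_cast [Nat.cast_sub hs]; ring
  have e5 : (((n+1)).factorial : ℝ) = ((n:ℝ)+1) * (n.factorial : ℝ) := by
    rw [Nat.factorial_succ]; push_cast; ring
  rw [e4, e5]
  push_cast [Nat.cast_sub hs]
  field_simp
  ring

lemma castN3 (n t : ℕ) (ht : t < n) :
    (n.choose (t+1) : ℝ) * ((t:ℝ)+1) = (n.choose t : ℝ) * ((n:ℝ)-t) := by
  have h : ((n.choose (t+1) * (t+1) : ℕ) : ℝ) = ((n.choose t * (n-t) : ℕ) : ℝ) :=
    congrArg (Nat.cast : ℕ → ℝ) (Nat.choose_succ_right_eq n t)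
  push_cast [Nat.cast_sub (le_of_lt ht)] at h
  linarith [h]

lemma castPascal (n t : ℕ) :
    ((n+1).choose (t+1) : ℝ) = (n.choose t : ℝ) + (n.choose (t+1) : ℝ) := by
  rw [Nat.choose_succ_succ]; push_cast; ring

lemma LB (α β : ℝ) (n s : ℕ) :
    ((s:ℝ) + ((n:ℝ)+α+β+1)) * jc α β n s = ((n:ℝ)+α+β+1) * jc α (β+1) n s := by
  unfold jc
  have h : (n:ℝ)+α+(β+1)+1 = ((n:ℝ)+α+β+1)+1 := by ring
  rw [h]
  linear_combination ((n.choose s:ℝ) * pch (n-s) ((s:ℝ)+α+1)) * pch_shift s ((n:ℝ)+α+β+1)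

lemma Ljc0 (α β : ℝ) (n : ℕ) : jc α (β+1) n 0 = jc α β n 0 := by
  simp [jc, pch_zero]

lemma LD (α β : ℝ) (n s : ℕ) (hs : s ≤ n) :
    ((n:ℝ)+1-s) * jc α β (n+1) s = ((n:ℝ)+1) * (α+(n:ℝ)+1) * jc α (β+1) n s := by
  unfold jc
  have e1 : n + 1 - s = (n - s) + 1 := by omega
  rw [e1, pch_succ]
  have e2 : ((n+1:ℕ):ℝ) + α + β + 1 = (n:ℝ) + α + (β+1) + 1 := by push_cast; ring
  rw [e2]
  have e3 : ((n-s:ℕ):ℝ) = (n:ℝ) - s := Nat.cast_sub hs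
  rw [e3]
  linear_combination (pch (n-s) ((s:ℝ)+α+1) * pch s ((n:ℝ)+α+(β+1)+1) * ((s:ℝ)+α+1+((n:ℝ)-s))) * castN1 n s hs

lemma LA (α β : ℝ) (n t : ℕ) (ht : t < n) :
    ((n:ℝ)-t) * jc α (β+1) n t + ((n:ℝ)+β-t) * jc α (β+1) n (t+1)
      = ((n:ℝ)+β+1) * jc α β n (t+1) := by
  unfold jc
  have hA : (n:ℝ)+α+(β+1)+1 = ((n:ℝ)+α+β+1)+1 := by ring
  rw [hA]
  have e1 : n - t = (n - t - 1) + 1 := by omega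
  have e2 : n - (t+1) = n - t - 1 := by omega
  rw [e1, e2, pch_succ_left]
  have e3 : ((t+1:ℕ):ℝ) + α + 1 = ((t:ℝ)+α+1)+1 := by push_cast; ring
  rw [e3]
  rw [pch_succ t (((n:ℝ)+α+β+1)+1), pch_succ_left t ((n:ℝ)+α+β+1)]
  linear_combination (- pch (n-t-1) ((t:ℝ)+α+1+1) * pch t ((n:ℝ)+α+β+1+1) * ((t:ℝ)+α+1)) * castN3 n t ht

lemma LC (α β : ℝ) (n t : ℕ) (ht : t < n) :
    ((n:ℝ)+α+β+(t:ℝ)+2) * jc α (β+1) n t + ((n:ℝ)+α+(t:ℝ)+2) * jc α (β+1) n (t+1)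
      = jc α β (n+1) (t+1) := by
  unfold jc
  have hA : (n:ℝ)+α+(β+1)+1 = ((n:ℝ)+α+β+1)+1 := by ring
  have hA2 : ((n+1:ℕ):ℝ)+α+β+1 = ((n:ℝ)+α+β+1)+1 := by push_cast; ring
  rw [hA, hA2]
  have e1 : n - t = (n - t - 1) + 1 := by omega
  have e2 : n - (t+1) = n - t - 1 := by omega
  have e2' : n + 1 - (t+1) = (n - t - 1) + 1 := by omega
  rw [e1, e2, e2']
  have e3 : ((t+1:ℕ):ℝ) + α + 1 = ((t:ℝ)+α+1)+1 := by push_cast; ring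
  rw [e3]
  rw [pch_succ_left (n-t-1) ((t:ℝ)+α+1), pch_succ (n-t-1) (((t:ℝ)+α+1)+1),
      pch_succ t (((n:ℝ)+α+β+1)+1)]
  have e4 : ((n-t-1:ℕ):ℝ) = (n:ℝ) - t - 1 := by
    rw [Nat.cast_sub (by omega), Nat.cast_sub (le_of_lt ht)]; push_cast; ring
  rw [e4]
  linear_combination
    (pch (n-t-1) ((t:ℝ)+α+1+1) * pch t (((n:ℝ)+α+β+1)+1) * (((n:ℝ)+α+β+1)+1+(t:ℝ))) * castN3 n t ht
    - (pch (n-t-1) ((t:ℝ)+α+1+1) * pch t (((n:ℝ)+α+β+1)+1) * (((n:ℝ)+α+β+1)+1+(t:ℝ)) * ((n:ℝ)+α+1)) * castPascal n t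

lemma LC0 (α β : ℝ) (n : ℕ) :
    ((n:ℝ)+α+1) * jc α (β+1) n 0 = jc α β (n+1) 0 := by
  unfold jc
  simp only [Nat.choose_zero_right, Nat.cast_one, Nat.sub_zero, Nat.cast_zero]
  have hA2 : ((n+1:ℕ):ℝ)+α+β+1 = ((n:ℝ)+α+β+1)+1 := by push_cast; ring
  rw [hA2, pch_succ n ((0:ℝ)+α+1)]
  simp [pch_zero]
  ring

lemma LCtop (α β : ℝ) (n : ℕ) :
    ((n:ℝ)+α+β+(n:ℝ)+2) * jc α (β+1) n n = jc α β (n+1) (n+1) := by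
  unfold jc
  have hA : (n:ℝ)+α+(β+1)+1 = ((n:ℝ)+α+β+1)+1 := by ring
  have hA2 : ((n+1:ℕ):ℝ)+α+β+1 = ((n:ℝ)+α+β+1)+1 := by push_cast; ring
  rw [hA, hA2]
  simp only [Nat.sub_self, Nat.choose_self, Nat.cast_one]
  rw [pch_succ n (((n:ℝ)+α+β+1)+1)]
  simp [pch_zero]
  ring

noncomputable def Yp : Polynomial ℝ := (X - 1) * C (2⁻¹ : ℝ)
noncomputable def S (f : ℕ → ℝ) (m : ℕ) : Polynomial ℝ := ∑ s ∈ Finset.range m, C (f s) * Yp ^ s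

def sh (e : ℕ → ℝ) : ℕ → ℝ
  | 0 => 0
  | (t+1) => e t
@[simp] lemma sh_zero (e : ℕ → ℝ) : sh e 0 = 0 := rfl
@[simp] lemma sh_succ (e : ℕ → ℝ) (t : ℕ) : sh e (t+1) = e t := rfl

lemma hC2 : (2:Polynomial ℝ) * C (2⁻¹:ℝ) = 1 := by
  rw [show (2:Polynomial ℝ) = C (2:ℝ) from (map_ofNat C 2).symm, ← C_mul]
  norm_num

lemma hder : derivative Yp = C (2⁻¹:ℝ) := by simp [Yp]

lemma hsub : (1:Polynomial ℝ) - X = -2 * Yp := by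
  unfold Yp
  linear_combination (X - 1) * hC2

lemma hadd : (1:Polynomial ℝ) + X = 2 * Yp + 2 := by
  linear_combination - hsub

lemma B1 (f : ℕ → ℝ) (m : ℕ) :
    (1 - X) * derivative (S f m) = S (fun s => -(s:ℝ) * f s) m := by
  unfold S
  rw [derivative_sum, Finset.mul_sum]
  refine Finset.sum_congr rfl fun s _ => ?_
  rw [derivative_C_mul, derivative_pow, hder]
  cases s with
  | zero => simp
  | succ t =>
    rw [hsub, Nat.add_sub_cancel]
    simp only [map_mul, map_neg, map_natCast]
    push_cast
    linear_combination (-((t:Polynomial ℝ)+1) * C (f (t+1)) * Yp^(t+1)) * hC2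

lemma Bshift (e : ℕ → ℝ) (m : ℕ) :
    ∑ s ∈ Finset.range m, C (e s) * Yp^(s+1)
      = ∑ s ∈ Finset.range (m+1), C (sh e s) * Yp^s := by
  rw [Finset.sum_range_succ']
  simp

lemma B2' (f : ℕ → ℝ) (m : ℕ) (a : ℝ) :
    C a * ((1 - X) * S f m)
      = ∑ s ∈ Finset.range (m+1), C (sh (fun t => -2 * a * f t) s) * Yp^s := by
  rw [← Bshift]
  unfold S
  rw [Finset.mul_sum, Finset.mul_sum]
  refine Finset.sum_congr rfl fun s _ => ?_
  rw [hsub]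
  simp only [map_mul, map_neg, map_ofNat]
  ring

lemma B3' (f : ℕ → ℝ) (m : ℕ) (a : ℝ) (hf : f m = 0) :
    C a * ((1 + X) * S f m)
      = ∑ s ∈ Finset.range (m+1),
          C (2 * a * f s + sh (fun t => 2 * a * f t) s) * Yp^s := by
  have key : C a * ((1 + X) * S f m)
      = ∑ s ∈ Finset.range m, (C (2*a*f s) * Yp^s + C (2*a*f s) * Yp^(s+1)) := by
    unfold S
    rw [Finset.mul_sum, Finset.mul_sum]
    refine Finset.sum_congr rfl fun s _ => ?_
    rw [hadd]
    simp only [map_mul, map_ofNat]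
    ring
  have expand : ∀ s, (C (2 * a * f s + sh (fun t => 2 * a * f t) s) : Polynomial ℝ) * Yp^s
      = C (2 * a * f s) * Yp^s + C (sh (fun t => 2 * a * f t) s) * Yp^s := by
    intro s; rw [C_add, add_mul]
  rw [key, Finset.sum_add_distrib, Bshift]
  simp only [expand]
  rw [Finset.sum_add_distrib]
  congr 1
  rw [Finset.sum_range_succ, show 2 * a * f m = 0 by rw [hf]; ring]
  simp

lemma B13 (f : ℕ → ℝ) (m : ℕ) (hf : f m = 0) :
    (1 - X^2) * derivative (S f m)
      = ∑ s ∈ Finset.range (m+1),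
          C (-2 * (s:ℝ) * f s + sh (fun t => -2 * (t:ℝ) * f t) s) * Yp^s := by
  have h1 : (1 - X^2) * derivative (S f m)
      = C (1:ℝ) * ((1 + X) * ((1 - X) * derivative (S f m))) := by
    simp only [map_one, one_mul]; ring
  rw [h1, B1, B3' _ _ _ (by simp [hf])]
  refine Finset.sum_congr rfl fun s _ => ?_
  congr 1
  cases s with
  | zero => simp
  | succ t => simp; ring

noncomputable def fc (α β : ℝ) (n s : ℕ) : ℝ := (n.factorial : ℝ)⁻¹ * jc α β n s

lemma fc_top (α β : ℝ) (n : ℕ) : fc α β n (n+1) = 0 := by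
  simp [fc, jc_zero α β (Nat.lt_succ_self n)]

lemma jacobiP_eq (α β : ℝ) (n : ℕ) : jacobiP α β n = S (fc α β n) (n+1) := by
  unfold jacobiP S fc jc pch Yp
  rw [Finset.smul_sum]
  refine Finset.sum_congr rfl fun s _ => ?_
  rw [smul_smul, Polynomial.smul_eq_C_mul]

lemma coeff_congr {a b : ℝ} (s : ℕ) (h : a = b) : C a * Yp^s = C b * Yp^s := by rw [h]

lemma Sgrow (f : ℕ → ℝ) (m : ℕ) (hf : f m = 0) : S f m = S f (m+1) := by
  unfold S
  rw [Finset.sum_range_succ, hf]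
  simp

lemma idB (α β : ℝ) (n : ℕ) :
    (1 - X) * derivative (jacobiP α β n) - C ((n:ℝ)+α+β+1) * jacobiP α β n
      = -(C ((n:ℝ)+α+β+1) * jacobiP α (β+1) n) := by
  rw [jacobiP_eq α β n, jacobiP_eq α (β+1) n, B1]
  unfold S
  rw [Finset.mul_sum, Finset.mul_sum, ← Finset.sum_sub_distrib, ← Finset.sum_neg_distrib]
  refine Finset.sum_congr rfl fun s _ => ?_
  rw [← mul_assoc (C ((n:ℝ)+α+β+1)), ← C_mul, ← sub_mul, ← C_sub,
      ← mul_assoc (C ((n:ℝ)+α+β+1)), ← C_mul, ← neg_mul, ← map_neg]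
  apply coeff_congr
  have hLB := LB α β n s
  unfold fc
  linear_combination (-((n.factorial:ℝ))⁻¹) * hLB

lemma hfac (n : ℕ) : (((n+1).factorial:ℝ))⁻¹ * ((n:ℝ)+1) = ((n.factorial:ℝ))⁻¹ := by
  rw [Nat.factorial_succ]
  have h1 : ((n:ℝ)+1) ≠ 0 := by positivity
  have h2 : ((n.factorial:ℝ)) ≠ 0 := by exact_mod_cast n.factorial_ne_zero
  push_cast
  field_simp

lemma idD (α β : ℝ) (n : ℕ) :
    (1 - X) * derivative (jacobiP α β (n+1)) + C ((n:ℝ)+1) * jacobiP α β (n+1)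
      = C (α+(n:ℝ)+1) * jacobiP α (β+1) n := by
  rw [jacobiP_eq α β (n+1), jacobiP_eq α (β+1) n, B1]
  unfold S
  rw [Finset.mul_sum, Finset.mul_sum, ← Finset.sum_add_distrib, Finset.sum_range_succ]
  have htop : C (-((n+1:ℕ):ℝ) * fc α β (n+1) (n+1)) * Yp^(n+1)
      + C ((n:ℝ)+1) * (C (fc α β (n+1) (n+1)) * Yp^(n+1)) = 0 := by
    rw [← mul_assoc, ← C_mul, ← add_mul, ← C_add]
    have h0 : -((n+1:ℕ):ℝ) * fc α β (n+1) (n+1) + ((n:ℝ)+1) * fc α β (n+1) (n+1) = 0 := by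
      push_cast; ring
    rw [h0]; simp
  rw [htop, add_zero]
  refine Finset.sum_congr rfl fun s hs => ?_
  have hs' : s ≤ n := by simp at hs; omega
  rw [← mul_assoc (C ((n:ℝ)+1)), ← C_mul, ← add_mul, ← C_add,
      ← mul_assoc (C (α+(n:ℝ)+1)), ← C_mul]
  apply coeff_congr
  have hLD := LD α β n s hs'
  have hf := hfac n
  unfold fc
  linear_combination (((n+1).factorial:ℝ))⁻¹ * hLD
    + ((α+(n:ℝ)+1) * jc α (β+1) n s) * hf

lemma idA (α β : ℝ) (n : ℕ) :
    (1 - X^2) * derivative (jacobiP α (β+1) n)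
      + (C (β+1) * (1 - X) + C ((n:ℝ)+β+1) * (1 + X)) * jacobiP α (β+1) n
      = C (2*((n:ℝ)+β+1)) * jacobiP α β n := by
  rw [jacobiP_eq α (β+1) n, jacobiP_eq α β n]
  have hsplit : (C (β+1) * (1 - X) + C ((n:ℝ)+β+1) * (1 + X)) * S (fc α (β+1) n) (n+1)
      = C (β+1) * ((1 - X) * S (fc α (β+1) n) (n+1))
        + C ((n:ℝ)+β+1) * ((1 + X) * S (fc α (β+1) n) (n+1)) := by ring
  rw [hsplit, B13 _ _ (fc_top α (β+1) n), B2', B3' _ _ _ (fc_top α (β+1) n)]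
  rw [← Finset.sum_add_distrib, ← Finset.sum_add_distrib, Sgrow (fc α β n) (n+1) (fc_top α β n)]
  unfold S
  rw [Finset.mul_sum]
  refine Finset.sum_congr rfl fun s hs => ?_
  have hmerge : ∀ a b c : ℝ, (C a : Polynomial ℝ) * Yp^s + (C b * Yp^s + C c * Yp^s)
      = C (a+b+c) * Yp^s := by
    intro a b c; simp only [map_add]; ring
  rw [hmerge, ← mul_assoc, ← C_mul]
  apply coeff_congr
  rcases s with _ | t
  · simp only [sh_zero, Nat.cast_zero]
    have := Ljc0 α β n
    unfold fc
    linear_combination (2*((n:ℝ)+β+1) * ((n.factorial:ℝ))⁻¹) * this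
  · have ht : t ≤ n := by simp at hs; omega
    simp only [sh_succ]
    rcases lt_or_eq_of_le ht with h | h
    · have hLA := LA α β n t h
      unfold fc
      push_cast
      linear_combination (2*((n.factorial:ℝ))⁻¹) * hLA
    · subst h
      have z1 : jc α (β+1) t (t+1) = 0 := jc_zero _ _ (Nat.lt_succ_self t)
      have z2 : jc α β t (t+1) = 0 := jc_zero _ _ (Nat.lt_succ_self t)
      unfold fc
      rw [z1, z2]
      push_cast
      ring

lemma idC (α β : ℝ) (n : ℕ) :
    (1 - X^2) * derivative (jacobiP α (β+1) n)
      + (C (β+1) * (1 - X) - C ((n:ℝ)+α+1) * (1 + X)) * jacobiP α (β+1) n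
      = -(C (2*((n:ℝ)+1)) * jacobiP α β (n+1)) := by
  rw [jacobiP_eq α (β+1) n, jacobiP_eq α β (n+1)]
  have hsplit : (C (β+1) * (1 - X) - C ((n:ℝ)+α+1) * (1 + X)) * S (fc α (β+1) n) (n+1)
      = C (β+1) * ((1 - X) * S (fc α (β+1) n) (n+1))
        + C (-((n:ℝ)+α+1)) * ((1 + X) * S (fc α (β+1) n) (n+1)) := by
    simp only [map_neg]; ring
  rw [hsplit, B13 _ _ (fc_top α (β+1) n), B2', B3' _ _ _ (fc_top α (β+1) n)]
  rw [← Finset.sum_add_distrib, ← Finset.sum_add_distrib]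
  unfold S
  rw [Finset.mul_sum, ← Finset.sum_neg_distrib]
  refine Finset.sum_congr rfl fun s hs => ?_
  have hmerge : ∀ a b c : ℝ, (C a : Polynomial ℝ) * Yp^s + (C b * Yp^s + C c * Yp^s)
      = C (a+b+c) * Yp^s := by
    intro a b c; simp only [map_add]; ring
  rw [hmerge, ← mul_assoc, ← C_mul, ← neg_mul, ← map_neg]
  apply coeff_congr
  have hf := hfac n
  rcases s with _ | t
  · simp only [sh_zero, Nat.cast_zero]
    have hLC0 := LC0 α β n
    unfold fc
    linear_combination (-2*((n.factorial:ℝ))⁻¹) * hLC0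
      + (2*jc α β (n+1) 0) * hf
  · have ht : t ≤ n := by simp at hs; omega
    simp only [sh_succ]
    rcases lt_or_eq_of_le ht with h | h
    · have hLC := LC α β n t h
      unfold fc
      push_cast
      linear_combination (-2*((n.factorial:ℝ))⁻¹) * hLC
        + (2*jc α β (n+1) (t+1)) * hf
    · subst h
      have z1 : jc α (β+1) t (t+1) = 0 := jc_zero _ _ (Nat.lt_succ_self t)
      have hLCtop := LCtop α β t
      unfold fc
      rw [z1]
      push_cast
      linear_combination (-2*((t.factorial:ℝ))⁻¹) * hLCtop
        + (2*jc α β (t+1) (t+1)) * hfac t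

lemma jacobiP_zero (α β : ℝ) : jacobiP α β 0 = 1 := by
  unfold jacobiP
  simp [pch]

end Univ

section Mv
open Polynomial Finset MvPolynomial


lemma pd_chain (i : Fin 2) (p : Polynomial ℝ) :
    pderiv i (Polynomial.aeval TT p)
      = Polynomial.aeval TT (derivative p) * pderiv i TT := by
  have h := Derivation.comp_aeval_eq (R := ℝ) (A := MP) (M := MP)
    (a := TT) ((pderiv i).restrictScalars ℝ) p
  simpa only [Derivation.restrictScalars_apply, smul_eq_mul] using h

lemma two_eq_C : (2 : MP) = MvPolynomial.C (2:ℂ) := (map_ofNat _ 2).symm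

lemma pd0T : pderiv (0 : Fin 2) TT = 2 * MvPolynomial.X 1 := by
  rw [two_eq_C]
  simp [pderiv_mul, pderiv_X_of_ne (show (1:Fin 2) ≠ 0 by decide)]
  ring

lemma pd1T : pderiv (1 : Fin 2) TT = 2 * MvPolynomial.X 0 := by
  rw [two_eq_C]
  simp [pderiv_mul, pderiv_X_of_ne (show (0:Fin 2) ≠ 1 by decide)]

lemma aeval_Creal (r : ℝ) :
    Polynomial.aeval TT (Polynomial.C r) = MvPolynomial.C ((r:ℂ)) := by
  simp [Polynomial.aeval_C]

example : (2 : MP) ≠ 0 := two_ne_zero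

lemma pdX1pow (b : ℕ) : pderiv (0 : Fin 2) ((MvPolynomial.X 1 : MP) ^ b) = 0 := by
  rw [pderiv_pow, pderiv_X_of_ne (show (1:Fin 2) ≠ 0 by decide)]
  ring


noncomputable def cf (μ : ℝ) (k : ℕ) : ℂ :=
  (((k.factorial : ℝ) / ((ascPochhammer ℝ k).eval (μ + 1)) : ℝ) : ℂ)

lemma zqj (μ : ℝ) (k b : ℕ) :
    zernikeQ μ k (k + b)
      = MvPolynomial.C (cf μ k) * MvPolynomial.X 1 ^ b *
          Polynomial.aeval TT (jacobiP μ ((b : ℕ) : ℝ) k) := by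
  rcases b with _ | b
  · rw [zernikeQ, if_pos (by omega : k + 0 ≤ k)]
    simp [cf, Nat.sub_self]
  · rw [zernikeQ, if_neg (by omega : ¬ k + (b+1) ≤ k)]
    have e : k + (b+1) - k = b + 1 := by omega
    rw [e, cf]

lemma zqk (μ : ℝ) (j d : ℕ) :
    zernikeQ μ (j + d) j
      = MvPolynomial.C (cf μ j) * MvPolynomial.X 0 ^ d *
          Polynomial.aeval TT (jacobiP μ ((d : ℕ) : ℝ) j) := by
  rw [zernikeQ, if_pos (by omega : j ≤ j + d)]
  have e : j + d - j = d := by omega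
  rw [e, cf]

lemma hcℝ (μ : ℝ) (hμ : μ > -1) (m : ℕ) :
    (μ + (m:ℝ) + 1) * (((m+1).factorial : ℝ) / ((ascPochhammer ℝ (m+1)).eval (μ + 1)))
      = ((m:ℝ) + 1) * ((m.factorial : ℝ) / ((ascPochhammer ℝ m).eval (μ + 1))) := by
  have hpos : 0 < (ascPochhammer ℝ m).eval (μ + 1) := ascPochhammer_pos m (μ+1) (by linarith)
  have hsucc : (ascPochhammer ℝ (m+1)).eval (μ+1)
      = (ascPochhammer ℝ m).eval (μ+1) * ((μ+1) + m) := ascPochhammer_succ_eval m (μ+1)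
  have h2 : ((μ:ℝ)+1) + m ≠ 0 := by
    have : (0:ℝ) ≤ m := Nat.cast_nonneg m
    linarith
  rw [hsucc, Nat.factorial_succ]
  push_cast
  field_simp
  ring

lemma hcC (μ : ℝ) (hμ : μ > -1) (m : ℕ) :
    ((μ:ℂ) + (m:ℂ) + 1) * cf μ (m+1) = ((m:ℂ) + 1) * cf μ m := by
  have h := hcℝ μ hμ m
  unfold cf
  have := congrArg (Complex.ofReal) h
  push_cast at this ⊢
  linear_combination this

lemma pdX1pow1 (b : ℕ) :
    pderiv (1 : Fin 2) ((MvPolynomial.X 1 : MP) ^ b) = (b : MP) * MvPolynomial.X 1 ^ (b-1) := by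
  rw [pderiv_pow, pderiv_X_self]
  ring

lemma pdX0pow0 (b : ℕ) :
    pderiv (0 : Fin 2) ((MvPolynomial.X 0 : MP) ^ b) = (b : MP) * MvPolynomial.X 0 ^ (b-1) := by
  rw [pderiv_pow, pderiv_X_self]
  ring

lemma pdX0pow1 (b : ℕ) : pderiv (1 : Fin 2) ((MvPolynomial.X 0 : MP) ^ b) = 0 := by
  rw [pderiv_pow, pderiv_X_of_ne (show (0:Fin 2) ≠ 1 by decide)]
  ring

lemma zqk' (μ : ℝ) (k j : ℕ) (h : j ≤ k) :
    zernikeQ μ k j = MvPolynomial.C (cf μ j) * MvPolynomial.X 0 ^ (k-j) *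
      Polynomial.aeval TT (jacobiP μ ((k-j : ℕ) : ℝ) j) := by
  rw [zernikeQ, if_pos h, cf]

lemma zqj' (μ : ℝ) (k j : ℕ) (h : k ≤ j) :
    zernikeQ μ k j = MvPolynomial.C (cf μ k) * MvPolynomial.X 1 ^ (j-k) *
      Polynomial.aeval TT (jacobiP μ ((j-k : ℕ) : ℝ) k) := by
  rcases eq_or_lt_of_le h with rfl | hlt
  · rw [zernikeQ, if_pos le_rfl]
    simp [cf, Nat.sub_self]
  · rw [zernikeQ, if_neg (by omega), cf]

lemma hconMP (μ : ℝ) (hμ : μ > -1) (m : ℕ) :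
    (MvPolynomial.C ((μ:ℂ)) + (m:MP) + 1) * MvPolynomial.C (cf μ (m+1))
      = ((m:MP) + 1) * MvPolynomial.C (cf μ m) := by
  have h := congrArg (MvPolynomial.C : ℂ →+* MP) (hcC μ hμ m)
  simpa only [map_mul, map_add, map_one, map_natCast] using h

end Mv

open MvPolynomial in
theorem zernike_ladder_Z5 (μ : ℝ) (hμ : μ > -1) (k j : ℕ) :
    (1 ≤ k →
      (1 - X 0 * X 1) * pderiv (0 : Fin 2) (zernikeQ μ k j) +
          C (((k : ℝ)) : ℂ) * X 1 * zernikeQ μ k j =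
        C (((k : ℝ)) : ℂ) * zernikeQ μ (k - 1) j) ∧
    (k = 0 →
      (1 - X 0 * X 1) * pderiv (0 : Fin 2) (zernikeQ μ k j) +
          C (((k : ℝ)) : ℂ) * X 1 * zernikeQ μ k j = 0) ∧
    ((1 - X 0 * X 1) * pderiv (1 : Fin 2) (zernikeQ μ k j) -
          C ((((k : ℝ) + μ + 1 : ℝ)) : ℂ) * X 0 * zernikeQ μ k j =
        -(C ((((k : ℝ) + μ + 1 : ℝ)) : ℂ) * zernikeQ μ (k + 1) j)) := by

  refine ⟨?_, ?_, ?_⟩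
  · -- identity 1, k ≥ 1
    intro hk
    obtain ⟨m, rfl⟩ : ∃ m, k = m + 1 := ⟨k - 1, by omega⟩
    simp only [Nat.add_sub_cancel]
    by_cases hjm : j ≤ m
    · -- first branch: j ≤ k - 1
      obtain ⟨d, rfl⟩ : ∃ d, m = j + d := ⟨m - j, by omega⟩
      rw [zqk' μ (j+d+1) j (by omega), zqk' μ (j+d) j (by omega)]
      have e1 : j + d + 1 - j = d + 1 := by omega
      have e2 : j + d - j = d := by omega
      rw [e1, e2]
      rw [pderiv_mul, pderiv_mul, pd_chain 0, pd0T]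
      simp only [pderiv_C, pdX0pow0, Nat.add_sub_cancel, zero_mul, mul_zero, zero_add, add_zero]
      apply mul_left_cancel₀ (two_ne_zero : (2 : MvPolynomial (Fin 2) ℂ) ≠ 0)
      have hA := congrArg (Polynomial.aeval TT) (idA μ (d:ℝ) j)
      simp only [map_add, map_sub, map_mul, map_neg, map_one, map_pow, Polynomial.aeval_X,
        aeval_Creal] at hA
      simp only [Nat.cast_add, Nat.cast_one, Complex.ofReal_add, Complex.ofReal_mul,
        Complex.ofReal_one, Complex.ofReal_natCast, Complex.ofReal_ofNat,
        map_add, map_mul, map_one, map_ofNat, map_natCast] at hA ⊢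
      linear_combination (MvPolynomial.C (cf μ j) * MvPolynomial.X 0 ^ d) * hA
    · -- second branch: j ≥ k
      obtain ⟨b, rfl⟩ : ∃ b, j = m + 1 + b := ⟨j - m - 1, by omega⟩
      rw [zqj' μ (m+1) (m+1+b) (by omega), zqj' μ m (m+1+b) (by omega)]
      have e1 : m + 1 + b - (m+1) = b := by omega
      have e2 : m + 1 + b - m = b + 1 := by omega
      rw [e1, e2]
      rw [pderiv_mul, pderiv_mul, pd_chain 0, pd0T]
      simp only [pderiv_C, pdX1pow, zero_mul, mul_zero, zero_add, add_zero]
      have hD := congrArg (Polynomial.aeval TT) (idD μ (b:ℝ) m)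
      simp only [map_add, map_sub, map_mul, map_neg, map_one, map_pow, Polynomial.aeval_X,
        aeval_Creal] at hD
      have hcon := hconMP μ hμ m
      simp only [Nat.cast_add, Nat.cast_one, Complex.ofReal_add, Complex.ofReal_mul,
        Complex.ofReal_one, Complex.ofReal_natCast, Complex.ofReal_ofNat,
        map_add, map_mul, map_one, map_ofNat, map_natCast] at hD hcon ⊢
      linear_combination (MvPolynomial.C (cf μ (m+1)) * MvPolynomial.X 1 ^ b * MvPolynomial.X 1) * hD
        + (MvPolynomial.X 1 ^ b * MvPolynomial.X 1 *
            Polynomial.aeval TT (jacobiP μ ((b:ℝ)+1) m)) * hcon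
  · -- identity with k = 0
    rintro rfl
    have hz : zernikeQ μ 0 j = MvPolynomial.C (cf μ 0) * MvPolynomial.X 1 ^ j *
        Polynomial.aeval TT (jacobiP μ ((j - 0 : ℕ) : ℝ) 0) := by
      have := zqj' μ 0 j (Nat.zero_le j)
      simpa using this
    have hp : pderiv (0 : Fin 2) (zernikeQ μ 0 j) = 0 := by
      rw [hz, jacobiP_zero, map_one, mul_one, pderiv_mul, pderiv_C, pdX1pow]
      simp
    rw [hp]
    simp
  · -- identity 3
    by_cases hjk : j ≤ k
    · obtain ⟨d, rfl⟩ : ∃ d, k = j + d := ⟨k - j, by omega⟩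
      rw [zqk' μ (j+d) j (by omega), zqk' μ (j+d+1) j (by omega)]
      have e1 : j + d - j = d := by omega
      have e2 : j + d + 1 - j = d + 1 := by omega
      rw [e1, e2]
      rw [pderiv_mul, pderiv_mul, pd_chain 1, pd1T]
      simp only [pderiv_C, pdX0pow1, zero_mul, mul_zero, zero_add, add_zero]
      have hB := congrArg (Polynomial.aeval TT) (idB μ (d:ℝ) j)
      simp only [map_add, map_sub, map_mul, map_neg, map_one, map_pow, Polynomial.aeval_X,
        aeval_Creal] at hB
      simp only [Nat.cast_add, Nat.cast_one, Complex.ofReal_add, Complex.ofReal_mul,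
        Complex.ofReal_one, Complex.ofReal_natCast, Complex.ofReal_ofNat,
        map_add, map_mul, map_one, map_ofNat, map_natCast] at hB ⊢
      linear_combination (MvPolynomial.C (cf μ j) * MvPolynomial.X 0 ^ d * MvPolynomial.X 0) * hB
    · obtain ⟨b, rfl⟩ : ∃ b, j = k + (b + 1) := ⟨j - k - 1, by omega⟩
      rw [zqj' μ k (k+(b+1)) (by omega), zqj' μ (k+1) (k+(b+1)) (by omega)]
      have e1 : k + (b+1) - k = b + 1 := by omega
      have e2 : k + (b+1) - (k+1) = b := by omega
      rw [e1, e2]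
      rw [pderiv_mul, pderiv_mul, pd_chain 1, pd1T]
      simp only [pderiv_C, pdX1pow1, Nat.add_sub_cancel, zero_mul, mul_zero, zero_add, add_zero]
      apply mul_left_cancel₀ (two_ne_zero : (2 : MvPolynomial (Fin 2) ℂ) ≠ 0)
      have hC2 := congrArg (Polynomial.aeval TT) (idC μ (b:ℝ) k)
      simp only [map_add, map_sub, map_mul, map_neg, map_one, map_pow, Polynomial.aeval_X,
        aeval_Creal] at hC2
      have hcon := hconMP μ hμ k
      simp only [Nat.cast_add, Nat.cast_one, Complex.ofReal_add, Complex.ofReal_mul,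
        Complex.ofReal_one, Complex.ofReal_natCast, Complex.ofReal_ofNat,
        map_add, map_mul, map_one, map_ofNat, map_natCast] at hC2 hcon ⊢
      linear_combination (MvPolynomial.C (cf μ k) * MvPolynomial.X 1 ^ b) * hC2
        + (2 * MvPolynomial.X 1 ^ b *
            Polynomial.aeval TT (jacobiP μ ((b:ℝ)) (k+1))) * hcon
end

section
/- Let μ > −1 and define the second-order operator L_μ = 2(1−zw) ∂²/∂z∂z̄ − (μ+1)(z ∂/∂z + w ∂/∂z̄) acting on bivariate polynomials in (z,w). Then for all integers k, j ≥ 0, L_μ Q^μ_{k,j}(z,w) = λ^μ_{k,j} Q^μ_{k,j}(z,w), where λ^μ_{k,j} = −2kj − (μ+1)(k+j). -/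
/-!
With `x = (t - 1) / 2`, the Jacobi polynomial `P_n^{(α,β)}(t)` is `(n!)⁻¹ F(x)` for a
polynomial `F = ∑ a_k x^k` whose coefficients satisfy the two-term recurrence
`(k + 1)(k + α + 1) a_{k+1} = (n - k)(n + k + α + β + 1) a_k`; comparing coefficients, this says
that `F` solves the hypergeometric equation
`x(1 + x) F'' + ((α + 1) + (α + β + 2) x) F' = n(n + α + β + 1) F`.

For `j ≤ k` we have `Q^μ_{k,j} = c z^m F(zw - 1)` with `m = k - j`, `n = j`, `α = μ`, `β = m`.
By the chain rule, `L_μ (z^m F(zw - 1))` is `z^m` times `-2` times the hypergeometric operator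
applied to `F` at `x = zw - 1`, minus `(μ + 1) m z^m F(zw - 1)`, which gives the eigenvalue.
The case `k < j` follows because `L_μ` is symmetric under `z ↔ w`.
-/

section JacobiP

open Polynomial

noncomputable def jacobiCoeff (α β : ℝ) (n k : ℕ) : ℝ :=
  n.choose k * (ascPochhammer ℝ (n - k)).eval (k + α + 1) *
    (ascPochhammer ℝ k).eval (n + α + β + 1)

noncomputable def jacobiShifted (α β : ℝ) (n : ℕ) : ℝ[X] :=
  ∑ k ∈ Finset.range (n + 1), C (jacobiCoeff α β n k) * X ^ k

lemma aeval_two_mul_add_one_jacobiP {A : Type*} [CommRing A] [Algebra ℝ A] (α β : ℝ) (n : ℕ)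
    (x : A) :
    aeval (2 * x + 1) (jacobiP α β n)
      = (n.factorial : ℝ)⁻¹ • aeval x (jacobiShifted α β n) := by
  have hx : aeval (2 * x + 1) ((X - 1) * C (2⁻¹ : ℝ)) = x := by
    rw [map_mul, map_sub, aeval_X, map_one, aeval_C, add_sub_cancel_right, mul_comm,
      ← Algebra.smul_def, two_mul, ← two_smul ℝ x, smul_smul]
    norm_num
  simp only [jacobiP, jacobiShifted, map_smul, map_sum, map_pow, hx, map_mul, aeval_C, aeval_X]
  simp only [jacobiCoeff, Algebra.smul_def]

lemma cast_choose_succ_mul_s14 (n m : ℕ) :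
    (n.choose (m + 1) : ℝ) * (m + 1) = n.choose m * (n - m) := by
  rcases le_or_gt m n with hm | hm
  · have h := congrArg (Nat.cast (R := ℝ)) (Nat.choose_succ_right_eq n m)
    push_cast [Nat.cast_sub hm] at h
    exact h
  · simp [Nat.choose_eq_zero_of_lt hm, Nat.choose_eq_zero_of_lt (hm.trans (Nat.lt_succ_self m))]

lemma jacobiCoeff_succ (α β : ℝ) (n m : ℕ) :
    (m + 1) * (m + α + 1) * jacobiCoeff α β n (m + 1)
      = (n - m) * (n + m + α + β + 1) * jacobiCoeff α β n m := by
  have hchoose := cast_choose_succ_mul_s14 n m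
  rcases lt_or_ge m n with hm | hm
  · obtain ⟨t, ht⟩ : ∃ t, n - m = t + 1 := ⟨n - m - 1, by omega⟩
    have hpoch : (ascPochhammer ℝ (t + 1)).eval ((m : ℝ) + α + 1)
        = (m + α + 1) * (ascPochhammer ℝ t).eval ((m : ℝ) + 1 + α + 1) := by
      rw [ascPochhammer_succ_left, eval_mul, eval_X, eval_comp]
      simp only [eval_add, eval_X, eval_one]
      rw [add_right_comm (m : ℝ) 1 α]
    simp only [jacobiCoeff, ht, show n - (m + 1) = t by omega, hpoch, ascPochhammer_succ_eval]
    push_cast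
    linear_combination ((m + α + 1) * (ascPochhammer ℝ t).eval ((m : ℝ) + 1 + α + 1) *
      (ascPochhammer ℝ m).eval ((n : ℝ) + α + β + 1) * (n + m + α + β + 1)) * hchoose
  · have hzero : (n.choose (m + 1) : ℝ) = 0 := by
      exact_mod_cast Nat.choose_eq_zero_of_lt (by omega)
    rw [hzero, zero_mul] at hchoose
    simp only [jacobiCoeff, hzero]
    linear_combination ((n + m + α + β + 1) *
      (ascPochhammer ℝ (n - m)).eval ((m : ℝ) + α + 1) *
      (ascPochhammer ℝ m).eval ((n : ℝ) + α + β + 1)) * hchoose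

lemma coeff_jacobiShifted (α β : ℝ) (n m : ℕ) :
    (jacobiShifted α β n).coeff m = jacobiCoeff α β n m := by
  simp only [jacobiShifted, finsetSum_coeff, coeff_C_mul, coeff_X_pow, mul_ite, mul_one,
    mul_zero, Finset.sum_ite_eq, Finset.mem_range]
  split_ifs with hm
  · rfl
  · simp [jacobiCoeff, Nat.choose_eq_zero_of_lt (by omega : n < m)]

lemma coeff_X_mul_derivative {R : Type*} [Semiring R] (p : R[X]) (m : ℕ) :
    (X * derivative p).coeff m = m * p.coeff m := by
  cases m with
  | zero => simp
  | succ m =>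
    rw [coeff_X_mul, coeff_derivative, Nat.cast_comm, Nat.cast_succ]

lemma jacobiShifted_ode (α β : ℝ) (n : ℕ) :
    (X ^ 2 + X) * derivative (derivative (jacobiShifted α β n))
      + (C (α + 1) + C (α + β + 2) * X) * derivative (jacobiShifted α β n)
      = C (n * (n + α + β + 1)) * jacobiShifted α β n := by
  set S := jacobiShifted α β n
  -- in terms of the Euler operator `θ = X * derivative`, which acts diagonally on coefficients
  have hEuler : (X ^ 2 + X) * derivative (derivative S)
      + (C (α + 1) + C (α + β + 2) * X) * derivative S
      = X * derivative (X * derivative S) + C (α + β + 1) * (X * derivative S)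
        + derivative (X * derivative S + C α * S) := by
    simp only [derivative_add, derivative_mul, derivative_X, derivative_C, zero_mul, one_mul,
      C_add, C_1, map_ofNat]
    ring
  rw [hEuler]
  ext m
  simp only [coeff_add, coeff_C_mul, coeff_X_mul_derivative, coeff_derivative, S,
    coeff_jacobiShifted]
  push_cast
  linear_combination jacobiCoeff_succ α β n m

end JacobiP

namespace MvPolynomial

variable {σ R : Type*}

lemma pderiv_pderiv_comm [CommRing R] (i j : σ) (f : MvPolynomial σ R) :
    pderiv i (pderiv j f) = pderiv j (pderiv i f) := by
  classical
  have hbracket :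
      ⁅pderiv i, pderiv j⁆ = (0 : Derivation R (MvPolynomial σ R) (MvPolynomial σ R)) :=
    derivation_ext fun k => by
      rw [Derivation.commutator_apply, pderiv_X, pderiv_X]
      by_cases hj : j = k <;> by_cases hi : i = k <;> simp [hi, hj]
  rw [← sub_eq_zero, ← Derivation.commutator_apply, hbracket, Derivation.zero_apply]

lemma pderiv_aeval [CommSemiring R] {S : Type*} [CommSemiring S] [Algebra R S] (i : σ)
    (x : MvPolynomial σ S) (P : Polynomial R) :
    pderiv i (Polynomial.aeval x P) = Polynomial.aeval x (Polynomial.derivative P) * pderiv i x :=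
  ((pderiv i).restrictScalars R).map_aeval P x

lemma X_mul_pderiv_X_pow [CommSemiring R] (i : σ) (m : ℕ) :
    X i * pderiv i (X i ^ m : MvPolynomial σ R) = (m : MvPolynomial σ R) * X i ^ m := by
  cases m with
  | zero => simp
  | succ m => rw [pderiv_pow, pderiv_X_self, Nat.add_sub_cancel, pow_succ]; ring

end MvPolynomial

open MvPolynomial

section ZernikeOperator

variable {σ : Type*}

noncomputable def zernikeOperator (μ : ℝ) (i i' : σ) (f : MvPolynomial σ ℂ) :
    MvPolynomial σ ℂ :=
  C 2 * (1 - X i * X i') * pderiv i' (pderiv i f)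
    - C ((μ + 1 : ℝ) : ℂ) * (X i * pderiv i f + X i' * pderiv i' f)

lemma zernikeOperator_comm (μ : ℝ) (i i' : σ) (f : MvPolynomial σ ℂ) :
    zernikeOperator μ i i' f = zernikeOperator μ i' i f := by
  simp only [zernikeOperator, pderiv_pderiv_comm i i', mul_comm (X i) (X i'), add_comm]

lemma zernikeOperator_C_mul (μ : ℝ) (i i' : σ) (c : ℂ) (f : MvPolynomial σ ℂ) :
    zernikeOperator μ i i' (C c * f) = C c * zernikeOperator μ i i' f := by
  simp only [zernikeOperator, pderiv_C_mul]
  ring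

lemma zernikeOperator_X_pow_mul_aeval (μ : ℝ) {i i' : σ} (hii' : i ≠ i') (m p : ℕ)
    (S : Polynomial ℝ)
    (hS : (Polynomial.X ^ 2 + Polynomial.X) * Polynomial.derivative (Polynomial.derivative S)
        + (Polynomial.C (μ + 1) + Polynomial.C (μ + m + 2) * Polynomial.X)
          * Polynomial.derivative S
      = Polynomial.C (p * (p + μ + m + 1)) * S) :
    zernikeOperator μ i i' (X i ^ m * Polynomial.aeval (X i * X i' - 1) S)
      = C ((-2 * p * (p + μ + m + 1) - (μ + 1) * m : ℝ) : ℂ)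
        * (X i ^ m * Polynomial.aeval (X i * X i' - 1) S) := by
  set v : MvPolynomial σ ℂ := X i * X i' - 1
  set g := Polynomial.aeval v S
  set g₁ := Polynomial.aeval v (Polynomial.derivative S)
  set g₂ := Polynomial.aeval v (Polynomial.derivative (Polynomial.derivative S))
  have hv : pderiv i v = X i' := by simp [v, pderiv_X_of_ne hii'.symm]
  have hv' : pderiv i' v = X i := by simp [v, pderiv_X_of_ne hii']
  have hXm' : pderiv i' (X i ^ m : MvPolynomial σ ℂ) = 0 := by simp [pderiv_X_of_ne hii']
  have hXpow := X_mul_pderiv_X_pow (R := ℂ) i m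
  have h₁ : X i * pderiv i (X i ^ m * g)
      = X i ^ m * ((m : MvPolynomial σ ℂ) * g + X i * X i' * g₁) := by
    rw [pderiv_mul, pderiv_aeval, hv]
    linear_combination g * hXpow
  have h₂ : X i' * pderiv i' (X i ^ m * g) = X i ^ m * (X i * X i' * g₁) := by
    rw [pderiv_mul, pderiv_aeval, hv', hXm']
    ring
  have h₃ : pderiv i' (pderiv i (X i ^ m * g))
      = X i ^ m * (((m : MvPolynomial σ ℂ) + 1) * g₁ + X i * X i' * g₂) := by
    rw [pderiv_pderiv_comm, pderiv_mul, pderiv_aeval, hv', hXm', zero_mul, zero_add, pderiv_mul,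
      pderiv_mul, pderiv_aeval, hv, pderiv_X_self]
    linear_combination g₁ * hXpow
  have hS' := congrArg (Polynomial.aeval v) hS
  simp only [map_add, map_mul, map_pow, Polynomial.aeval_X, Polynomial.aeval_C,
    MvPolynomial.algebraMap_apply, Complex.coe_algebraMap] at hS'
  rw [zernikeOperator, h₁, h₂, h₃]
  push_cast at hS' ⊢
  simp only [map_add, map_mul, map_sub, map_neg, map_one, map_ofNat, map_natCast] at hS' ⊢
  linear_combination (-2 * X i ^ m) * hS'

end ZernikeOperator

lemma factorial_div_mul_inv_factorial (n : ℕ) (a : ℝ) :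
    n.factorial / a * (n.factorial : ℝ)⁻¹ = a⁻¹ := by
  field_simp

lemma zernikeQ_of_le (μ : ℝ) {k j : ℕ} (hjk : j ≤ k) :
    zernikeQ μ k j = C ((((ascPochhammer ℝ j).eval (μ + 1))⁻¹ : ℝ) : ℂ)
      * (X 0 ^ (k - j) * Polynomial.aeval (X 0 * X 1 - 1) (jacobiShifted μ (k - j : ℕ) j)) := by
  rw [zernikeQ, if_pos hjk, show (2 * X 0 * X 1 - 1 : MvPolynomial (Fin 2) ℂ)
    = 2 * (X 0 * X 1 - 1) + 1 by ring, aeval_two_mul_add_one_jacobiP, Algebra.smul_def,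
    MvPolynomial.algebraMap_apply, Complex.coe_algebraMap]
  rw [← factorial_div_mul_inv_factorial j ((ascPochhammer ℝ j).eval (μ + 1)),
    Complex.ofReal_mul, map_mul]
  ring

lemma zernikeQ_of_lt (μ : ℝ) {k j : ℕ} (hkj : k < j) :
    zernikeQ μ k j = C ((((ascPochhammer ℝ k).eval (μ + 1))⁻¹ : ℝ) : ℂ)
      * (X 1 ^ (j - k) * Polynomial.aeval (X 1 * X 0 - 1) (jacobiShifted μ (j - k : ℕ) k)) := by
  rw [zernikeQ, if_neg hkj.not_ge, show (2 * X 0 * X 1 - 1 : MvPolynomial (Fin 2) ℂ)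
    = 2 * (X 1 * X 0 - 1) + 1 by ring, aeval_two_mul_add_one_jacobiP, Algebra.smul_def,
    MvPolynomial.algebraMap_apply, Complex.coe_algebraMap]
  rw [← factorial_div_mul_inv_factorial k ((ascPochhammer ℝ k).eval (μ + 1)),
    Complex.ofReal_mul, map_mul]
  ring

open MvPolynomial in
theorem zernike_eigen_general (μ : ℝ) (k j : ℕ) :
    C ((2 : ℂ)) * (1 - X 0 * X 1) *
          pderiv (1 : Fin 2) (pderiv (0 : Fin 2) (zernikeQ μ k j)) -
        C (((μ + 1 : ℝ)) : ℂ) *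
          (X 0 * pderiv (0 : Fin 2) (zernikeQ μ k j) +
            X 1 * pderiv (1 : Fin 2) (zernikeQ μ k j)) =
      C (((-2 * (k : ℝ) * (j : ℝ) - (μ + 1) * ((k : ℝ) + (j : ℝ)) : ℝ)) : ℂ) *
        zernikeQ μ k j := by
  change zernikeOperator μ 0 1 (zernikeQ μ k j) = _
  rcases le_or_gt j k with hjk | hkj
  · rw [zernikeQ_of_le μ hjk, zernikeOperator_C_mul, zernikeOperator_X_pow_mul_aeval μ
      (by decide) _ _ _ (jacobiShifted_ode _ _ _), mul_left_comm]
    congr 3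
    push_cast [Nat.cast_sub hjk]
    ring
  · rw [zernikeQ_of_lt μ hkj, zernikeOperator_comm, zernikeOperator_C_mul,
      zernikeOperator_X_pow_mul_aeval μ (by decide) _ _ _ (jacobiShifted_ode _ _ _), mul_left_comm]
    congr 3
    push_cast [Nat.cast_sub hkj.le]
    ring

open MvPolynomial in
theorem zernike_eigen (μ : ℝ) (hμ : μ > -1) (k j : ℕ) :
    C ((2 : ℂ)) * (1 - X 0 * X 1) *
          pderiv (1 : Fin 2) (pderiv (0 : Fin 2) (zernikeQ μ k j)) -
        C (((μ + 1 : ℝ)) : ℂ) *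
          (X 0 * pderiv (0 : Fin 2) (zernikeQ μ k j) +
            X 1 * pderiv (1 : Fin 2) (zernikeQ μ k j)) =
      C (((-2 * (k : ℝ) * (j : ℝ) - (μ + 1) * ((k : ℝ) + (j : ℝ)) : ℝ)) : ℂ) *
        zernikeQ μ k j :=
  zernike_eigen_general μ k j
end
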